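/- Every sequent derivable in EQ₁₂ (with cut) has a cut-free semishortening derivation in EQ₁₂, with respect to any antireflexive binary relation ≺ on terms. -/

import Mathlib

inductive Tm : Type
  | var : Nat → Tm
  | const : Nat → Tm
  | app : Nat → Tm → Tm

def Tm.subst (v : Nat) (r : Tm) : Tm → Tm
  | .var w => if w = v then r else .var w
  | .const c => .const c
  | .app f t => .app f (Tm.subst v r t)

def Tm.count (v : Nat) : Tm → Nat
  | .var w => if w = v then 1 else 0
  | .const _ => 0
  | .app _ t => t.count v

inductive Fml : Type
  | eq : Tm → Tm → Fml
  | atom : Nat → Tm → Fml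
  | imp : Fml → Fml → Fml
  | and : Fml → Fml → Fml
  | or : Fml → Fml → Fml
  | neg : Fml → Fml
  | all : Nat → Fml → Fml
  | ex : Nat → Fml → Fml

def Fml.subst (v : Nat) (r : Tm) : Fml → Fml
  | .eq t u => .eq (Tm.subst v r t) (Tm.subst v r u)
  | .atom p t => .atom p (Tm.subst v r t)
  | .imp A B => .imp (Fml.subst v r A) (Fml.subst v r B)
  | .and A B => .and (Fml.subst v r A) (Fml.subst v r B)
  | .or A B => .or (Fml.subst v r A) (Fml.subst v r B)
  | .neg A => .neg (Fml.subst v r A)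
  | .all x A => .all x (if x = v then A else Fml.subst v r A)
  | .ex x A => .ex x (if x = v then A else Fml.subst v r A)

def Fml.count (v : Nat) : Fml → Nat
  | .eq t u => t.count v + u.count v
  | .atom _ t => t.count v
  | .imp A B => A.count v + B.count v
  | .and A B => A.count v + B.count v
  | .or A B => A.count v + B.count v
  | .neg A => A.count v
  | .all x A => if x = v then 0 else A.count v
  | .ex x A => if x = v then 0 else A.count v

/-- Tags for the equality rules of the equational sequent calculi. -/
inductive EqRule | r1 | r2 | l1 | l2 | cng
  deriving DecidableEq

/-- Derivability in the equational sequent calculus.  Sequents have the form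
`Γ ⇒ F` with `Γ : List Fml` and `F : Fml`.  The calculus has logical axioms
`F ⇒ F`, reflexivity axioms `⇒ t = t`, the weak left structural rules
(weakening, exchange, contraction), the cut rule (enabled when `cut = true`),
and the equality rules `=₁`, `=₂`, `=₁ˡ`, `=₂ˡ` and `CNG`, each guarded by the
side condition `ok tag F v r s` (where `F` is the changing formula, `v` the
substituted variable and `r`, `s` the terms involved). -/
inductive Der (ok : EqRule → Fml → Nat → Tm → Tm → Prop) (cut : Bool) :
    List Fml → Fml → Prop
  | ax (F : Fml) : Der ok cut [F] F
  | refl (t : Tm) : Der ok cut [] (.eq t t)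
  | wk {Γ H} (F) : Der ok cut Γ H → Der ok cut (F :: Γ) H
  | exch {Γ₁ Γ₂ F G H} : Der ok cut (Γ₁ ++ F :: G :: Γ₂) H →
      Der ok cut (Γ₁ ++ G :: F :: Γ₂) H
  | contr {Γ F H} : Der ok cut (F :: F :: Γ) H → Der ok cut (F :: Γ) H
  | cutr {Γ Λ F H} : cut = true → Der ok cut Γ F → Der ok cut (F :: Λ) H →
      Der ok cut (Γ ++ Λ) H
  | eq1 {Γ F v r s} : ok .r1 F v r s → Der ok cut Γ (F.subst v r) →
      Der ok cut (.eq r s :: Γ) (F.subst v s)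
  | eq2 {Γ F v r s} : ok .r2 F v r s → Der ok cut Γ (F.subst v r) →
      Der ok cut (.eq s r :: Γ) (F.subst v s)
  | eq1l {Γ F v r s H} : ok .l1 F v r s → Der ok cut (F.subst v r :: Γ) H →
      Der ok cut (F.subst v s :: .eq r s :: Γ) H
  | eq2l {Γ F v r s H} : ok .l2 F v r s → Der ok cut (F.subst v r :: Γ) H →
      Der ok cut (F.subst v s :: .eq s r :: Γ) H
  | cng {Γ Λ F v r s} : ok .cng F v r s → Der ok cut Γ (F.subst v r) →
      Der ok cut Λ (.eq r s) → Der ok cut (Γ ++ Λ) (F.subst v s)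

/-- The side condition allowing exactly the equality rules in `tags`,
with no further restriction. -/
def allow (tags : List EqRule) : EqRule → Fml → Nat → Tm → Tm → Prop :=
  fun t _ _ _ _ => t ∈ tags

/-- The semishortening side condition relative to `prec`: `=₁` and `=₁ˡ`
inferences must be shortening (`r ≺ s`), while `=₂` and `=₂ˡ` inferences must
be nonlengthening (`¬ s ≺ r`); `CNG` is not allowed. -/
def semiOk (prec : Tm → Tm → Prop) : EqRule → Fml → Nat → Tm → Tm → Prop
  | .r1, _, _, r, s => prec r s
  | .l1, _, _, r, s => prec r s
  | .r2, _, _, r, s => ¬ prec s r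
  | .l2, _, _, r, s => ¬ prec s r
  | .cng, _, _, _, _ => False


/-!
Since all function symbols are unary, terms are strings and an equality inference replaces a
suffix `u` by `t` at some occurrences. Read the antecedent as a set `S` of hypotheses. In a
semishortening derivation each equation of `S` can be used in one direction only, but the left
rules rewrite hypotheses in the opposite direction. The key lemma is that derivability from `S`
is nevertheless closed under rewriting backwards, by induction on the derivation: when the
backward rewrite overlaps the last forward one, the two are reconciled by an equation that a left
rule adds to `S`, namely a member equation rewritten backwards. Rewriting in both directions
makes equality inferences with any derivable equation admissible, hence cut, and every
derivation in `EQ` can then be simulated.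
-/

namespace Tm

def apps : List Nat → Tm → Tm
  | [], b => b
  | f :: p, b => .app f (apps p b)

@[simp] theorem apps_cons (f : Nat) (p : List Nat) (b : Tm) :
    apps (f :: p) b = .app f (apps p b) := rfl

theorem apps_append (p q : List Nat) (b : Tm) : apps (p ++ q) b = apps p (apps q b) := by
  induction p with
  | nil => rfl
  | cons f p ih => simp [ih]

theorem apps_eq_apps : ∀ {p q : List Nat} {a b : Tm}, apps p a = apps q b →
    (∃ c, q = p ++ c ∧ a = apps c b) ∨ (∃ c, p = q ++ c ∧ b = apps c a)
  | [], _, _, _, h => .inl ⟨_, rfl, h⟩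
  | _ :: _, [], _, _, h => .inr ⟨_, rfl, h.symm⟩
  | f :: p, g :: q, a, b, h => by
    obtain ⟨rfl, h'⟩ := Tm.app.inj h
    rcases apps_eq_apps h' with ⟨c, rfl, rfl⟩ | ⟨c, rfl, rfl⟩
    exacts [.inl ⟨c, rfl, rfl⟩, .inr ⟨c, rfl, rfl⟩]

theorem subst_apps (v : Nat) (c : Tm) (p : List Nat) (b : Tm) :
    Tm.subst v c (apps p b) = apps p (Tm.subst v c b) := by
  induction p with
  | nil => rfl
  | cons f p ih => simp [Tm.subst, ih]

def varBound : Tm → Nat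
  | .var w => w + 1
  | .const _ => 0
  | .app _ t => varBound t

theorem subst_of_varBound_le {v : Nat} (c : Tm) : ∀ {t : Tm}, t.varBound ≤ v → Tm.subst v c t = t
  | .var w, h => by
    have : w ≠ v := by simp only [varBound] at h; omega
    simp [Tm.subst, this]
  | .const _, _ => rfl
  | .app f t, h => by simp [Tm.subst, subst_of_varBound_le c (t := t) h]

end Tm

/-- Bound variables count too: `Fml.subst` does not rename, so a variable at or above this bound
is never captured. -/
def Fml.varBound : Fml → Nat
  | .eq a b => max a.varBound b.varBound
  | .atom _ t => t.varBound
  | .imp A B | .and A B | .or A B => max A.varBound B.varBound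
  | .neg A => A.varBound
  | .all x A | .ex x A => max (x + 1) A.varBound

open Tm

/-- Since terms are chains of unary applications, every subterm is a suffix: `Repl u t x y`
says that `y` arises from `x` by replacing a suffix `u` by `t`, or `y = x`. -/
def Repl (u t x y : Tm) : Prop := x = y ∨ ∃ p, x = apps p u ∧ y = apps p t

namespace Repl

variable {u t x y : Tm}

theorem refl (u t x : Tm) : Repl u t x x := .inl rfl

theorem symm : Repl u t x y → Repl t u y x
  | .inl h => .inl h.symm
  | .inr ⟨p, hx, hy⟩ => .inr ⟨p, hy, hx⟩

theorem apps (p : List Nat) : Repl u t x y → Repl u t (Tm.apps p x) (Tm.apps p y)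
  | .inl h => .inl (h ▸ rfl)
  | .inr ⟨q, hx, hy⟩ => .inr ⟨p ++ q, by rw [hx, apps_append], by rw [hy, apps_append]⟩

theorem eq_of_self : Repl u u x y → x = y
  | .inl h => h
  | .inr ⟨_, hx, hy⟩ => hx.trans hy.symm

theorem subst (u t : Tm) (v : Nat) : ∀ a : Tm, Repl u t (Tm.subst v u a) (Tm.subst v t a)
  | .var w => by
    by_cases h : w = v
    · simp only [Tm.subst, h, ↓reduceIte]
      exact .inr ⟨[], rfl, rfl⟩
    · simp only [Tm.subst, h, ↓reduceIte]
      exact refl u t _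
  | .const k => refl u t (.const k)
  | .app f a => (subst u t v a).apps [f]

end Repl

inductive Lift (R : Tm → Tm → Prop) : Fml → Fml → Prop
  | eq {a a' b b'} : R a a' → R b b' → Lift R (.eq a b) (.eq a' b')
  | atom {t t'} (n) : R t t' → Lift R (.atom n t) (.atom n t')
  | imp {A A' B B'} : Lift R A A' → Lift R B B' → Lift R (.imp A B) (.imp A' B')
  | and {A A' B B'} : Lift R A A' → Lift R B B' → Lift R (.and A B) (.and A' B')
  | or {A A' B B'} : Lift R A A' → Lift R B B' → Lift R (.or A B) (.or A' B')
  | neg {A A'} : Lift R A A' → Lift R (.neg A) (.neg A')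
  | all {A A'} (x) : Lift R A A' → Lift R (.all x A) (.all x A')
  | ex {A A'} (x) : Lift R A A' → Lift R (.ex x A) (.ex x A')

namespace Lift

variable {R R₁ R₂ : Tm → Tm → Prop} {X Y Z : Fml}

theorem refl (hR : ∀ t, R t t) : ∀ F, Lift R F F
  | .eq a b => .eq (hR a) (hR b)
  | .atom n t => .atom n (hR t)
  | .imp A B => .imp (refl hR A) (refl hR B)
  | .and A B => .and (refl hR A) (refl hR B)
  | .or A B => .or (refl hR A) (refl hR B)
  | .neg A => .neg (refl hR A)
  | .all x A => .all x (refl hR A)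
  | .ex x A => .ex x (refl hR A)

theorem mono (hR : ∀ x y, R₁ x y → R₂ x y) (h : Lift R₁ X Y) : Lift R₂ X Y := by
  induction h <;> constructor <;> solve_by_elim

theorem swap (h : Lift R X Y) : Lift (flip R) Y X := by
  induction h <;> constructor <;> assumption

theorem eq_of_eq (h : Lift (· = ·) X Y) : X = Y := by
  induction h <;> simp_all

theorem comp (h₁ : Lift R₁ X Y) (h₂ : Lift R₂ Y Z) : Lift (Relation.Comp R₁ R₂) X Z := by
  induction h₁ generalizing Z <;> cases h₂ <;> constructor <;>
    solve_by_elim [Exists.intro, And.intro]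

theorem exists_of_comp (h : Lift (Relation.Comp R₁ R₂) X Z) : ∃ Y, Lift R₁ X Y ∧ Lift R₂ Y Z := by
  induction h with
  | eq h₁ h₂ =>
    obtain ⟨a, ha, ha'⟩ := h₁
    obtain ⟨b, hb, hb'⟩ := h₂
    exact ⟨_, .eq ha hb, .eq ha' hb'⟩
  | atom n h =>
    obtain ⟨a, ha, ha'⟩ := h
    exact ⟨_, .atom n ha, .atom n ha'⟩
  | imp _ _ ih₁ ih₂ =>
    obtain ⟨⟨A, hA, hA'⟩, ⟨B, hB, hB'⟩⟩ := And.intro ih₁ ih₂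
    exact ⟨_, .imp hA hB, .imp hA' hB'⟩
  | and _ _ ih₁ ih₂ =>
    obtain ⟨⟨A, hA, hA'⟩, ⟨B, hB, hB'⟩⟩ := And.intro ih₁ ih₂
    exact ⟨_, .and hA hB, .and hA' hB'⟩
  | or _ _ ih₁ ih₂ =>
    obtain ⟨⟨A, hA, hA'⟩, ⟨B, hB, hB'⟩⟩ := And.intro ih₁ ih₂
    exact ⟨_, .or hA hB, .or hA' hB'⟩
  | neg _ ih =>
    obtain ⟨A, hA, hA'⟩ := ih
    exact ⟨_, .neg hA, .neg hA'⟩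
  | all x _ ih =>
    obtain ⟨A, hA, hA'⟩ := ih
    exact ⟨_, .all x hA, .all x hA'⟩
  | ex x _ ih =>
    obtain ⟨A, hA, hA'⟩ := ih
    exact ⟨_, .ex x hA, .ex x hA'⟩

theorem subst (u t : Tm) (v : Nat) : ∀ F : Fml, Lift (Repl u t) (F.subst v u) (F.subst v t)
  | .eq a b => .eq (Repl.subst u t v a) (Repl.subst u t v b)
  | .atom n a => .atom n (Repl.subst u t v a)
  | .imp A B => .imp (subst u t v A) (subst u t v B)
  | .and A B => .and (subst u t v A) (subst u t v B)
  | .or A B => .or (subst u t v A) (subst u t v B)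
  | .neg A => .neg (subst u t v A)
  | .all x A => by
    by_cases h : x = v
    · simpa [Fml.subst, h] using .all v (refl (Repl.refl u t) A)
    · simpa [Fml.subst, h] using .all x (subst u t v A)
  | .ex x A => by
    by_cases h : x = v
    · simpa [Fml.subst, h] using .ex v (refl (Repl.refl u t) A)
    · simpa [Fml.subst, h] using .ex x (subst u t v A)

end Lift

theorem Repl.exists_subst {u t x y : Tm} {v : Nat} (h : Repl u t x y) (hv : x.varBound ≤ v) :
    ∃ a, Tm.subst v u a = x ∧ Tm.subst v t a = y := by
  rcases h with rfl | ⟨p, rfl, rfl⟩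
  · exact ⟨x, subst_of_varBound_le u hv, subst_of_varBound_le t hv⟩
  · exact ⟨Tm.apps p (.var v), by simp [subst_apps, Tm.subst], by simp [subst_apps, Tm.subst]⟩

theorem Lift.exists_subst {u t : Tm} {X Y : Fml} (h : Lift (Repl u t) X Y) {v : Nat}
    (hv : X.varBound ≤ v) : ∃ F : Fml, F.subst v u = X ∧ F.subst v t = Y := by
  induction h <;> simp only [Fml.varBound, max_le_iff] at hv
  case eq ha hb =>
    obtain ⟨⟨a, ha, ha'⟩, ⟨b, hb, hb'⟩⟩ := And.intro (ha.exists_subst hv.1) (hb.exists_subst hv.2)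
    exact ⟨.eq a b, by simp [Fml.subst, ha, hb], by simp [Fml.subst, ha', hb']⟩
  case atom n ha =>
    obtain ⟨a, ha, ha'⟩ := ha.exists_subst hv
    exact ⟨.atom n a, by simp [Fml.subst, ha], by simp [Fml.subst, ha']⟩
  case imp ih₁ ih₂ =>
    obtain ⟨⟨A, hA, hA'⟩, ⟨B, hB, hB'⟩⟩ := And.intro (ih₁ hv.1) (ih₂ hv.2)
    exact ⟨.imp A B, by simp [Fml.subst, hA, hB], by simp [Fml.subst, hA', hB']⟩
  case and ih₁ ih₂ =>
    obtain ⟨⟨A, hA, hA'⟩, ⟨B, hB, hB'⟩⟩ := And.intro (ih₁ hv.1) (ih₂ hv.2)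
    exact ⟨.and A B, by simp [Fml.subst, hA, hB], by simp [Fml.subst, hA', hB']⟩
  case or ih₁ ih₂ =>
    obtain ⟨⟨A, hA, hA'⟩, ⟨B, hB, hB'⟩⟩ := And.intro (ih₁ hv.1) (ih₂ hv.2)
    exact ⟨.or A B, by simp [Fml.subst, hA, hB], by simp [Fml.subst, hA', hB']⟩
  case neg ih =>
    obtain ⟨A, hA, hA'⟩ := ih hv
    exact ⟨.neg A, by simp [Fml.subst, hA], by simp [Fml.subst, hA']⟩
  case all x _ ih =>
    obtain ⟨A, hA, hA'⟩ := ih hv.2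
    have hx : x ≠ v := by omega
    exact ⟨.all x A, by simp [Fml.subst, hx, hA], by simp [Fml.subst, hx, hA']⟩
  case ex x _ ih =>
    obtain ⟨A, hA, hA'⟩ := ih hv.2
    have hx : x ≠ v := by omega
    exact ⟨.ex x A, by simp [Fml.subst, hx, hA], by simp [Fml.subst, hx, hA']⟩

section Semishortening

variable {prec : Tm → Tm → Prop} {S S' : Set Fml}

variable (prec) in
/-- `S` licenses a semishortening equality inference from `F[u]` to `F[t]`. -/
def Rewrites (S : Set Fml) (u t : Tm) : Prop :=
  (.eq u t ∈ S ∧ prec u t) ∨ (.eq t u ∈ S ∧ ¬ prec t u)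

def EqPair (S : Set Fml) (a b : Tm) : Prop := .eq a b ∈ S ∨ .eq b a ∈ S

theorem Rewrites.mono (hS : S ⊆ S') {u t : Tm} : Rewrites prec S u t → Rewrites prec S' u t :=
  Or.imp (And.imp_left (@hS _)) (And.imp_left (@hS _))

theorem Rewrites.exists_singleton {u t : Tm} :
    Rewrites prec S u t → ∃ m ∈ S, Rewrites prec {m} u t
  | .inl ⟨h, hp⟩ => ⟨_, h, .inl ⟨rfl, hp⟩⟩
  | .inr ⟨h, hp⟩ => ⟨_, h, .inr ⟨rfl, hp⟩⟩

theorem Rewrites.eqPair {u t : Tm} : Rewrites prec S u t → EqPair S u t :=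
  Or.imp And.left And.left

theorem EqPair.rewrites_or (prec : Tm → Tm → Prop) {a b : Tm} (h : EqPair S a b) :
    Rewrites prec S a b ∨ Rewrites prec S b a := by
  by_cases hab : prec a b <;> by_cases hba : prec b a <;> rcases h with h | h <;>
    simp_all [Rewrites]

/-- Cut-free semishortening `EQ₁₂` with the antecedent read as a set, so that the weak structural
rules are built in; `rw` is `=₁`/`=₂`, and `rwl` is `=₁ˡ`/`=₂ˡ` with the principal formulas
contracted into `S`. -/
inductive SemiDer (prec : Tm → Tm → Prop) : Set Fml → Fml → Prop
  | ax {S : Set Fml} {F : Fml} : F ∈ S → SemiDer prec S F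
  | refl (S : Set Fml) (t : Tm) : SemiDer prec S (.eq t t)
  | rw {S : Set Fml} {F : Fml} {v : Nat} {u t : Tm} : Rewrites prec S u t →
      SemiDer prec S (F.subst v u) → SemiDer prec S (F.subst v t)
  | rwl {S : Set Fml} {F : Fml} {v : Nat} {u t : Tm} {H : Fml} : Rewrites prec S u t →
      F.subst v t ∈ S → SemiDer prec (insert (F.subst v u) S) H → SemiDer prec S H

theorem SemiDer.mono {H : Fml} (d : SemiDer prec S H) (hS : S ⊆ S') : SemiDer prec S' H := by
  induction d generalizing S' with
  | ax h => exact .ax (hS h)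
  | refl _ t => exact .refl _ t
  | rw hr _ ih => exact .rw (hr.mono hS) (ih hS)
  | rwl hr hm _ ih => exact .rwl (hr.mono hS) (hS hm) (ih (Set.insert_subset_insert hS))

theorem SemiDer.exists_finite {H : Fml} (d : SemiDer prec S H) :
    ∃ T ⊆ S, T.Finite ∧ SemiDer prec T H := by
  induction d with
  | @ax _ F h => exact ⟨{F}, by simpa using h, Set.finite_singleton F, .ax rfl⟩
  | refl S t => exact ⟨∅, Set.empty_subset S, Set.finite_empty, .refl ∅ t⟩
  | rw hr _ ih =>
    obtain ⟨T, hTS, hT, d⟩ := ih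
    obtain ⟨m, hm, hr⟩ := hr.exists_singleton
    exact ⟨insert m T, Set.insert_subset hm hTS, hT.insert m,
      .rw (hr.mono (by simp)) (d.mono (Set.subset_insert m T))⟩
  | @rwl S F v u t H hr hmem _ ih =>
    obtain ⟨T, hTS, hT, d⟩ := ih
    obtain ⟨m, hm, hr⟩ := hr.exists_singleton
    refine ⟨insert m (insert (F.subst v t) (T \ {F.subst v u})), ?_, (hT.sdiff.insert _).insert _,
      .rwl (F := F) (v := v) (hr.mono (by simp)) (by simp) (d.mono ?_)⟩
    · simpa [Set.insert_subset_iff, hm, hmem] using hTS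
    · intro x hx
      by_cases x = F.subst v u <;> simp_all

variable (prec) in
def FmlStep (S : Set Fml) (X Y : Fml) : Prop :=
  ∃ u t, Rewrites prec S u t ∧ Lift (Repl u t) X Y

theorem FmlStep.mono (hS : S ⊆ S') {X Y : Fml} :
    FmlStep prec S X Y → FmlStep prec S' X Y
  | ⟨u, t, hr, h⟩ => ⟨u, t, hr.mono hS, h⟩

theorem SemiDer.of_fmlStep {X Y : Fml} (d : SemiDer prec S X) :
    FmlStep prec S X Y → SemiDer prec S Y
  | ⟨_, _, hr, h⟩ => by
    obtain ⟨F, hX, hY⟩ := h.exists_subst le_rfl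
    rw [← hX] at d
    exact hY ▸ .rw hr d

theorem SemiDer.of_reflTransGen {X Y : Fml} (d : SemiDer prec S X)
    (h : Relation.ReflTransGen (FmlStep prec S) X Y) : SemiDer prec S Y := by
  induction h with
  | refl => exact d
  | tail _ hs ih => exact ih.of_fmlStep hs

theorem SemiDer.of_insert {e X H : Fml} (he : FmlStep prec S e X) (hX : X ∈ S)
    (d : SemiDer prec (insert e S) H) : SemiDer prec S H := by
  obtain ⟨_, _, hr, h⟩ := he
  obtain ⟨F, he, hX'⟩ := h.exists_subst le_rfl
  rw [← he] at d
  exact .rwl hr (hX' ▸ hX) d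

/-- The left rules add each intermediate formula as a hypothesis. -/
theorem SemiDer.of_reflTransGen_mem {X Y : Fml} (h : Relation.ReflTransGen (FmlStep prec S) Y X)
    (hX : X ∈ S) : SemiDer prec S Y := by
  suffices ∀ S', S ⊆ S' → X ∈ S' → SemiDer prec S' Y from this S subset_rfl hX
  clear hX
  induction h with
  | refl => exact fun S' _ hX => .ax hX
  | @tail Z X _ hZX ih =>
    exact fun S' hS hX => .of_insert (hZX.mono hS) hX
      (ih _ (hS.trans (Set.subset_insert Z S')) (Set.mem_insert Z S'))

/-- The hypotheses that the left rules can add in one step. -/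
def Enriched (prec : Tm → Tm → Prop) (S : Set Fml) : Set Fml :=
  S ∪ {e | ∃ X ∈ S, FmlStep prec S e X}

theorem SemiDer.of_union_finite {T : Set Fml} (hT : T.Finite)
    (hTS : ∀ e ∈ T, ∃ X ∈ S, FmlStep prec S e X) {H : Fml} (d : SemiDer prec (S ∪ T) H) :
    SemiDer prec S H := by
  induction T, hT using Set.Finite.induction_on with
  | empty => simpa using d
  | @insert e T _ _ ih =>
    obtain ⟨X, hX, he⟩ := hTS e (Set.mem_insert e T)
    refine ih (fun e' he' => hTS e' (Set.mem_insert_of_mem e he')) ?_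
    exact .of_insert (he.mono Set.subset_union_left) (.inl hX) (by rwa [← Set.union_insert])

theorem SemiDer.of_enriched {H : Fml} (d : SemiDer prec (Enriched prec S) H) :
    SemiDer prec S H := by
  obtain ⟨T, hTS, hT, d⟩ := d.exists_finite
  refine of_union_finite (hT.sdiff (t := S)) (fun e he => (hTS he.1).resolve_left he.2) (d.mono ?_)
  rw [Set.union_sdiff_self]
  exact Set.subset_union_right

variable (prec) in
def TmStep (S : Set Fml) (x y : Tm) : Prop :=
  x = y ∨ ∃ p u t, Rewrites prec S u t ∧ x = apps p u ∧ y = apps p t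

theorem TmStep.mono (hS : S ⊆ S') {x y : Tm} : TmStep prec S x y → TmStep prec S' x y :=
  Or.imp_right fun ⟨p, u, t, hr, hx, hy⟩ => ⟨p, u, t, hr.mono hS, hx, hy⟩

theorem Repl.tmStep {u t x y : Tm} (hr : Rewrites prec S u t) :
    Repl u t x y → TmStep prec S x y :=
  Or.imp_right fun ⟨p, hx, hy⟩ => ⟨p, u, t, hr, hx, hy⟩

theorem TmStep.reflTransGen_map (f : Tm → Fml)
    (hf : ∀ u t x y, Repl u t x y → Lift (Repl u t) (f x) (f y)) {x y : Tm} :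
    TmStep prec S x y → Relation.ReflTransGen (FmlStep prec S) (f x) (f y)
  | .inl rfl => .refl
  | .inr ⟨p, u, t, hr, hx, hy⟩ => .single ⟨u, t, hr, hf u t x y (.inr ⟨p, hx, hy⟩)⟩

theorem FmlStep.reflTransGen_map (g : Fml → Fml)
    (hg : ∀ u t X Y, Lift (Repl u t) X Y → Lift (Repl u t) (g X) (g Y)) {X Y : Fml}
    (h : Relation.ReflTransGen (FmlStep prec S) X Y) :
    Relation.ReflTransGen (FmlStep prec S) (g X) (g Y) :=
  h.lift g fun _ _ ⟨u, t, hr, h⟩ => ⟨u, t, hr, hg u t _ _ h⟩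

theorem Lift.reflTransGen {X Y : Fml} (h : Lift (TmStep prec S) X Y) :
    Relation.ReflTransGen (FmlStep prec S) X Y := by
  have refl := fun u t => Lift.refl (Repl.refl u t)
  induction h with
  | @eq a a' b b' ha hb =>
    exact (ha.reflTransGen_map (.eq · b) fun u t _ _ h => .eq h (.refl u t b)).trans
      (hb.reflTransGen_map (.eq a' ·) fun u t _ _ h => .eq (.refl u t a') h)
  | atom n h => exact h.reflTransGen_map (.atom n ·) fun _ _ _ _ h => .atom n h
  | @imp A A' B B' _ _ ih₁ ih₂ =>
    exact (FmlStep.reflTransGen_map (.imp · B) (fun u t _ _ h => .imp h (refl u t B)) ih₁).trans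
      (FmlStep.reflTransGen_map (.imp A' ·) (fun u t _ _ h => .imp (refl u t A') h) ih₂)
  | @and A A' B B' _ _ ih₁ ih₂ =>
    exact (FmlStep.reflTransGen_map (.and · B) (fun u t _ _ h => .and h (refl u t B)) ih₁).trans
      (FmlStep.reflTransGen_map (.and A' ·) (fun u t _ _ h => .and (refl u t A') h) ih₂)
  | @or A A' B B' _ _ ih₁ ih₂ =>
    exact (FmlStep.reflTransGen_map (.or · B) (fun u t _ _ h => .or h (refl u t B)) ih₁).trans
      (FmlStep.reflTransGen_map (.or A' ·) (fun u t _ _ h => .or (refl u t A') h) ih₂)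
  | neg _ ih => exact FmlStep.reflTransGen_map .neg (fun _ _ _ _ => .neg) ih
  | all x _ ih => exact FmlStep.reflTransGen_map (.all x) (fun _ _ _ _ => .all x) ih
  | ex x _ ih => exact FmlStep.reflTransGen_map (.ex x) (fun _ _ _ _ => .ex x) ih

/-- The new equation is the member equation of `S` between `a` and `apps c t`, rewritten
backwards at `t`. -/
theorem EqPair.enriched {a u t : Tm} {c : List Nat} (h : EqPair S a (apps c t))
    (hr : Rewrites prec S u t) : EqPair (Enriched prec S) a (apps c u) := by
  rcases h with h | h
  · exact .inl (.inr ⟨_, h, u, t, hr, .eq (.refl u t a) (.inr ⟨c, rfl, rfl⟩)⟩)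
  · exact .inr (.inr ⟨_, h, u, t, hr, .eq (.inr ⟨c, rfl, rfl⟩) (.refl u t a)⟩)

theorem TmStep.exists_common_source_of_overlap {p c : List Nat} {u u' t' : Tm}
    (hr : Rewrites prec S u (apps c t')) (hr' : Rewrites prec S u' t') :
    ∃ z, TmStep prec (Enriched prec S) z (apps p u) ∧
      TmStep prec (Enriched prec S) z (apps p (apps c u')) := by
  rcases (hr.eqPair.enriched hr').rewrites_or prec with h | h
  · exact ⟨_, .inl rfl, .inr ⟨p, _, _, h, rfl, rfl⟩⟩
  · exact ⟨_, .inr ⟨p, _, _, h, rfl, rfl⟩, .inl rfl⟩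

theorem TmStep.exists_common_source {a b x : Tm} (ha : TmStep prec S a x)
    (hb : TmStep prec S b x) :
    ∃ z, TmStep prec (Enriched prec S) z a ∧ TmStep prec (Enriched prec S) z b := by
  have hS : S ⊆ Enriched prec S := Set.subset_union_left
  rcases ha with rfl | ⟨p, u, t, hr, rfl, rfl⟩
  · exact ⟨b, hb.mono hS, .inl rfl⟩
  rcases hb with hb | ⟨q, u', t', hr', rfl, hx⟩
  · exact ⟨apps p u, .inl rfl, hb ▸ (Repl.tmStep hr (.inr ⟨p, rfl, rfl⟩)).mono hS⟩
  rcases apps_eq_apps hx with ⟨c, rfl, rfl⟩ | ⟨c, rfl, rfl⟩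
  · rw [apps_append]
    exact exists_common_source_of_overlap hr hr'
  · rw [apps_append]
    obtain ⟨z, hz, hz'⟩ := exists_common_source_of_overlap (p := q) hr' hr
    exact ⟨z, hz', hz⟩

theorem SemiDer.of_lift_tmStep {X Y : Fml} (d : SemiDer prec S X) (hS : S ⊆ S')
    (h : Lift (TmStep prec S') Y X) : SemiDer prec S' Y := by
  induction d generalizing S' Y with
  | ax hX => exact .of_reflTransGen_mem h.reflTransGen (hS hX)
  | refl _ t =>
    cases h with
    | eq h₁ h₂ =>
      obtain ⟨z, hz₁, hz₂⟩ := h₁.exists_common_source h₂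
      exact of_enriched ((SemiDer.refl _ z).of_reflTransGen (Lift.eq hz₁ hz₂).reflTransGen)
  | @rw S F v u t hr _ ih =>
    have hS' : S ⊆ Enriched prec S' := hS.trans Set.subset_union_left
    obtain ⟨Z, hZ, hZY⟩ := Lift.exists_of_comp <|
      ((Lift.subst u t v F).comp h.swap).mono fun x₀ y ⟨x, hx₀, hyx⟩ =>
        (Repl.tmStep (hr.mono hS) hx₀).exists_common_source hyx
    exact of_enriched ((ih hS' hZ.swap).of_reflTransGen hZY.reflTransGen)
  | rwl hr hm _ ih =>
    exact .rwl (hr.mono hS) (hS hm)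
      (ih (Set.insert_subset_insert hS) (h.mono fun _ _ => TmStep.mono (Set.subset_insert _ _)))

theorem SemiDer.iff_of_rewrites {u t : Tm} {X Y : Fml} (hr : Rewrites prec S u t)
    (h : Lift (Repl u t) X Y) : SemiDer prec S X ↔ SemiDer prec S Y :=
  ⟨fun d => d.of_fmlStep ⟨u, t, hr, h⟩,
    fun d => d.of_lift_tmStep subset_rfl (h.mono fun _ _ => Repl.tmStep hr)⟩

/-- Rewriting the equation `e₁[t] = e₂[t]` is rewriting `t` back to `u`, then
`e₁[u] = e₂[u]`, then `u` to `t` again. -/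
theorem Repl.comp_of_subst {u t e₁ e₂ x y : Tm} {w : Nat}
    (h : Repl (Tm.subst w t e₁) (Tm.subst w t e₂) x y) :
    Relation.Comp (flip (Repl u t))
      (Relation.Comp (Repl (Tm.subst w u e₁) (Tm.subst w u e₂)) (Repl u t)) x y := by
  rcases h with rfl | ⟨p, rfl, rfl⟩
  · exact ⟨x, .refl u t x, x, .refl _ _ x, .refl u t x⟩
  · exact ⟨_, (Repl.subst u t w e₁).apps p, _, .inr ⟨p, rfl, rfl⟩, (Repl.subst u t w e₂).apps p⟩

theorem SemiDer.rewrite_iff {r s : Tm} {X Y : Fml} (d : SemiDer prec S (.eq r s))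
    (h : Lift (Repl r s) X Y) : SemiDer prec S X ↔ SemiDer prec S Y := by
  generalize hE : Fml.eq r s = E at d
  induction d generalizing r s X Y with
  | ax hE' =>
    subst hE
    rcases EqPair.rewrites_or prec (.inl hE') with hr | hr
    · exact iff_of_rewrites hr h
    · exact (iff_of_rewrites hr (h.swap.mono fun _ _ => Repl.symm)).symm
  | refl _ t =>
    cases hE
    rw [(h.mono fun _ _ => Repl.eq_of_self).eq_of_eq]
  | @rw S F v u t hr _ ih =>
    cases F <;> simp only [Fml.subst, reduceCtorEq] at hE
    obtain ⟨rfl, rfl⟩ := Fml.eq.inj hE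
    obtain ⟨X', hX', h'⟩ := (h.mono fun _ _ => Repl.comp_of_subst (u := u)).exists_of_comp
    obtain ⟨Y', h', hY'⟩ := h'.exists_of_comp
    exact (iff_of_rewrites hr hX'.swap).symm.trans ((ih h' rfl).trans (iff_of_rewrites hr hY'))
  | rwl hr hm _ ih =>
    exact ⟨fun dX => .rwl hr hm ((ih h hE).1 (dX.mono (Set.subset_insert _ _))),
      fun dY => .rwl hr hm ((ih h hE).2 (dY.mono (Set.subset_insert _ _)))⟩

theorem SemiDer.rewrite_iff_of_or {r s : Tm} {X Y : Fml}
    (d : SemiDer prec S (.eq r s) ∨ SemiDer prec S (.eq s r)) (h : Lift (Repl r s) X Y) :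
    SemiDer prec S X ↔ SemiDer prec S Y :=
  d.elim (rewrite_iff · h) fun d => (d.rewrite_iff (h.swap.mono fun _ _ => Repl.symm)).symm

theorem SemiDer.cut {U : Set Fml} {H : Fml} (d : SemiDer prec U H)
    (hU : ∀ B ∈ U, SemiDer prec S B) : SemiDer prec S H := by
  induction d with
  | ax h => exact hU _ h
  | refl _ t => exact .refl S t
  | @rw U F v u t hr _ ih =>
    exact (rewrite_iff_of_or (hr.eqPair.imp (hU _) (hU _)) (Lift.subst u t v F)).1 (ih hU)
  | @rwl U F v u t H hr hm _ ih =>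
    refine ih fun B hB => ?_
    rcases hB with rfl | hB
    · exact (rewrite_iff_of_or (hr.eqPair.imp (hU _) (hU _)) (Lift.subst u t v F)).2 (hU _ hm)
    · exact hU B hB

theorem SemiDer.of_der {ok : EqRule → Fml → Nat → Tm → Tm → Prop} {cut : Bool} {Γ : List Fml}
    {H : Fml} (d : Der ok cut Γ H) : SemiDer prec {x | x ∈ Γ} H := by
  induction d with
  | ax F => exact .ax (List.mem_singleton_self F)
  | refl t => exact .refl _ t
  | wk F _ ih => exact ih.mono fun x hx => List.mem_cons_of_mem F hx
  | exch _ ih =>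
    refine ih.mono fun x hx => ?_
    simp only [Set.mem_ofPred_eq, List.mem_append, List.mem_cons] at hx ⊢
    tauto
  | contr _ ih =>
    refine ih.mono fun x hx => ?_
    simp only [Set.mem_ofPred_eq, List.mem_cons] at hx ⊢
    tauto
  | cutr _ _ _ ih₁ ih₂ =>
    refine ih₂.cut fun B hB => ?_
    rcases List.mem_cons.1 hB with rfl | hB
    · exact ih₁.mono fun x => List.mem_append_left _
    · exact .ax (List.mem_append_right _ hB)
  | @eq1 Γ F v r s _ _ ih =>
    exact (rewrite_iff (.ax List.mem_cons_self) (Lift.subst r s v F)).1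
      (ih.mono fun x => List.mem_cons_of_mem _)
  | @eq2 Γ F v r s _ _ ih =>
    exact (rewrite_iff_of_or (.inr (.ax List.mem_cons_self)) (Lift.subst r s v F)).1
      (ih.mono fun x => List.mem_cons_of_mem _)
  | @eq1l Γ F v r s H _ _ ih =>
    refine ih.cut fun B hB => ?_
    rcases List.mem_cons.1 hB with rfl | hB
    · exact (rewrite_iff (.ax (by simp)) (Lift.subst r s v F)).2 (.ax List.mem_cons_self)
    · exact .ax (by simp [hB])
  | @eq2l Γ F v r s H _ _ ih =>
    refine ih.cut fun B hB => ?_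
    rcases List.mem_cons.1 hB with rfl | hB
    · exact (rewrite_iff_of_or (.inr (.ax (by simp))) (Lift.subst r s v F)).2
        (.ax List.mem_cons_self)
    · exact .ax (by simp [hB])
  | @cng Γ Λ F v r s _ _ _ ih₁ ih₂ =>
    exact (rewrite_iff (ih₂.mono fun x => List.mem_append_right _) (Lift.subst r s v F)).1
      (ih₁.mono fun x => List.mem_append_left _)

end Semishortening

section Structural

variable {ok : EqRule → Fml → Nat → Tm → Tm → Prop} {cut : Bool} {H : Fml}

theorem Der.perm {Γ Γ' : List Fml} (hp : Γ.Perm Γ') : Der ok cut Γ H → Der ok cut Γ' H := by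
  suffices ∀ Γ₀, Der ok cut (Γ₀ ++ Γ) H → Der ok cut (Γ₀ ++ Γ') H by simpa using this []
  induction hp with
  | nil => exact fun _ => id
  | @cons a _ _ _ ih => exact fun Γ₀ d => by simpa using ih (Γ₀ ++ [a]) (by simpa using d)
  | swap => exact fun _ => Der.exch
  | trans _ _ ih₁ ih₂ => exact fun Γ₀ => ih₂ Γ₀ ∘ ih₁ Γ₀

theorem Der.append_left {Λ : List Fml} (d : Der ok cut Λ H) : ∀ Γ, Der ok cut (Γ ++ Λ) H
  | [] => d
  | F :: Γ => .wk F (append_left d Γ)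

theorem Der.of_mem {Γ : List Fml} {F : Fml} (hF : F ∈ Γ) : Der ok cut Γ F := by
  obtain ⟨s, t, rfl⟩ := List.append_of_mem hF
  exact ((Der.ax F).append_left (s ++ t)).perm
    ((List.perm_append_singleton F _).trans List.perm_middle.symm)

theorem Der.contr_of_mem {Γ : List Fml} {F : Fml} (hF : F ∈ Γ) (d : Der ok cut (F :: Γ) H) :
    Der ok cut Γ H := by
  obtain ⟨s, t, rfl⟩ := List.append_of_mem hF
  exact (Der.contr (d.perm (List.perm_middle.cons F))).perm List.perm_middle.symm

end Structural

theorem SemiDer.toDer {prec : Tm → Tm → Prop} {Γ : List Fml} {H : Fml}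
    (d : SemiDer prec {x | x ∈ Γ} H) : Der (semiOk prec) false Γ H := by
  generalize hS : {x | x ∈ Γ} = S at d
  induction d generalizing Γ with
  | ax h => exact .of_mem (by rwa [← hS] at h)
  | refl _ t => simpa using (Der.refl t).append_left Γ
  | rw hr _ ih =>
    subst hS
    rcases hr with ⟨hm, hp⟩ | ⟨hm, hp⟩
    · exact .contr_of_mem hm (.eq1 hp (ih rfl))
    · exact .contr_of_mem hm (.eq2 hp (ih rfl))
  | @rwl S F v u t H hr hmem _ ih =>
    subst hS
    have d := ih (Γ := F.subst v u :: Γ) (by ext; simp)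
    rcases hr with ⟨hm, hp⟩ | ⟨hm, hp⟩
    · exact .contr_of_mem hm (.contr_of_mem (List.mem_cons_of_mem _ hmem) (.eq1l hp d))
    · exact .contr_of_mem hm (.contr_of_mem (List.mem_cons_of_mem _ hmem) (.eq2l hp d))

theorem cutfree_semishortening_general (prec : Tm → Tm → Prop)
    (Γ : List Fml) (F : Fml)
    (h : Der (allow [.r1, .r2, .l1, .l2]) true Γ F) :
    Der (semiOk prec) false Γ F :=
  (SemiDer.of_der h).toDer

/-- Every sequent derivable in `EQ₁₂` (with cut and all four equality rules)
has a cut-free semishortening derivation in `EQ₁₂`, with respect to any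
antireflexive binary relation `≺` on terms (`r ≺ s` entails `s ⊀ r`). -/
theorem cutfree_semishortening (prec : Tm → Tm → Prop)
    (hprec : ∀ r s, prec r s → ¬ prec s r)
    (Γ : List Fml) (F : Fml)
    (h : Der (allow [.r1, .r2, .l1, .l2]) true Γ F) :
    Der (semiOk prec) false Γ F :=
  cutfree_semishortening_general prec Γ F h
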